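/- arXiv:1912.11225 — 6 statements merged into one kernel-verified Lean document; each statement's English description precedes it below -/
import Mathlib

section
/- Let H be the group of 3×3 upper unitriangular matrices over F_p[t] whose (1,2) and (2,3) entries are polynomials of degree at most 1 and whose (1,3) entry has degree at most 2. Let H1 be the subgroup with (2,3) and (1,3) entries zero, and H2 the subgroup with (1,2) and (1,3) entries zero. Then the cosets M1(ℓ1,Q1)·H1 and M2(ℓ2,Q2)·H2 intersect nontrivially if and only if ℓ1·ℓ2 = Q1 − Q2, where M1(ℓ,Q) is the unitriangular matrix with (2,3) entry ℓ and (1,3) entry Q (and (1,2) entry 0), and M2(ℓ,Q) has (1,2) entry ℓ and (1,3) entry Q (and (2,3) entry 0). -/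
open Polynomial

/-- `M1(ℓ,Q)`: upper unitriangular matrix with `(2,3)` entry `ℓ`, `(1,3)` entry `Q`. -/
noncomputable def M1 {p : ℕ} (ℓ Q : Polynomial (ZMod p)) : Matrix (Fin 3) (Fin 3) (Polynomial (ZMod p)) :=
  !![1, 0, Q; 0, 1, ℓ; 0, 0, 1]

/-- `M2(ℓ,Q)`: upper unitriangular matrix with `(1,2)` entry `ℓ`, `(1,3)` entry `Q`. -/
noncomputable def M2 {p : ℕ} (ℓ Q : Polynomial (ZMod p)) : Matrix (Fin 3) (Fin 3) (Polynomial (ZMod p)) :=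
  !![1, ℓ, Q; 0, 1, 0; 0, 0, 1]

/-- `H1`: the subgroup of unitriangular matrices whose only possibly nonzero off-diagonal entry
is a linear polynomial in position `(1,2)`. -/
def H1 (p : ℕ) : Set (Matrix (Fin 3) (Fin 3) (Polynomial (ZMod p))) :=
  {A | ∃ ℓ : Polynomial (ZMod p), ℓ.degree ≤ 1 ∧ A = !![1, ℓ, 0; 0, 1, 0; 0, 0, 1]}

/-- `H2`: the subgroup of unitriangular matrices whose only possibly nonzero off-diagonal entry
is a linear polynomial in position `(2,3)`. -/
def H2 (p : ℕ) : Set (Matrix (Fin 3) (Fin 3) (Polynomial (ZMod p))) :=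
  {A | ∃ ℓ : Polynomial (ZMod p), ℓ.degree ≤ 1 ∧ A = !![1, 0, 0; 0, 1, ℓ; 0, 0, 1]}

/- Writing `[x, y, z]` for the unitriangular matrix with entries `x, y, z` at `(1,2), (2,3), (1,3)`,
multiplying out gives `M1(ℓ1,Q1)·H1 = {[a, ℓ1, Q1] : deg a ≤ 1}` and
`M2(ℓ2,Q2)·H2 = {[ℓ2, b, Q2 + ℓ2 b] : deg b ≤ 1}`. A common element forces `a = ℓ2`, `b = ℓ1`
and `Q1 = Q2 + ℓ2 ℓ1`; conversely these choices give one. -/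

section Unitriangular

variable {R : Type*} [Semiring R]

theorem unitriangular_mul (a b c a' b' c' : R) :
    !![1, a, c; 0, 1, b; 0, 0, 1] * !![1, a', c'; 0, 1, b'; 0, 0, 1] =
      !![1, a + a', c + a * b' + c'; 0, 1, b + b'; 0, 0, 1] := by
  simp only [Matrix.mul_fin_three]
  congr 1; simp [add_comm, add_left_comm]

theorem unitriangular_inj {a b c a' b' c' : R} :
    !![1, a, c; 0, 1, b; 0, 0, 1] = !![1, a', c'; 0, 1, b'; 0, 0, 1] ↔
      a = a' ∧ b = b' ∧ c = c' := by
  constructor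
  · intro h
    exact ⟨congrFun (congrFun h 0) 1, congrFun (congrFun h 1) 2, congrFun (congrFun h 0) 2⟩
  · rintro ⟨rfl, rfl, rfl⟩
    rfl

end Unitriangular

section Cosets

variable {p : ℕ}

theorem mem_M1_mul_H1_iff {ℓ Q : Polynomial (ZMod p)} {X : Matrix (Fin 3) (Fin 3) (ZMod p)[X]} :
    X ∈ (M1 ℓ Q * ·) '' H1 p ↔ ∃ a : (ZMod p)[X], a.degree ≤ 1 ∧ X = !![1, a, Q; 0, 1, ℓ; 0, 0, 1] := by
  simp only [Set.mem_image, H1, Set.mem_ofPred_eq]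
  constructor
  · rintro ⟨_, ⟨a, ha, rfl⟩, rfl⟩
    exact ⟨a, ha, by rw [M1, unitriangular_mul]; simp⟩
  · rintro ⟨a, ha, rfl⟩
    exact ⟨_, ⟨a, ha, rfl⟩, by rw [M1, unitriangular_mul]; simp⟩

theorem mem_M2_mul_H2_iff {ℓ Q : Polynomial (ZMod p)} {X : Matrix (Fin 3) (Fin 3) (ZMod p)[X]} :
    X ∈ (M2 ℓ Q * ·) '' H2 p ↔
      ∃ b : (ZMod p)[X], b.degree ≤ 1 ∧ X = !![1, ℓ, Q + ℓ * b; 0, 1, b; 0, 0, 1] := by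
  simp only [Set.mem_image, H2, Set.mem_ofPred_eq]
  constructor
  · rintro ⟨_, ⟨b, hb, rfl⟩, rfl⟩
    exact ⟨b, hb, by rw [M2, unitriangular_mul]; simp⟩
  · rintro ⟨b, hb, rfl⟩
    exact ⟨_, ⟨b, hb, rfl⟩, by rw [M2, unitriangular_mul]; simp⟩

end Cosets

theorem coset_M1_H1_inter_M2_H2_general {p : ℕ}
    (ℓ1 ℓ2 Q1 Q2 : Polynomial (ZMod p))
    (hl1 : ℓ1.degree ≤ 1) (hl2 : ℓ2.degree ≤ 1) :
    (((M1 ℓ1 Q1 * ·) '' H1 p) ∩ ((M2 ℓ2 Q2 * ·) '' H2 p)).Nonempty ↔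
      ℓ1 * ℓ2 = Q1 - Q2 := by
  constructor
  · rintro ⟨X, h1, h2⟩
    obtain ⟨a, -, rfl⟩ := mem_M1_mul_H1_iff.1 h1
    obtain ⟨b, -, hX⟩ := mem_M2_mul_H2_iff.1 h2
    obtain ⟨rfl, rfl, hQ⟩ := unitriangular_inj.1 hX
    linear_combination -hQ
  · intro h
    refine ⟨_, mem_M1_mul_H1_iff.2 ⟨ℓ2, hl2, rfl⟩, mem_M2_mul_H2_iff.2 ⟨ℓ1, hl1, ?_⟩⟩
    exact unitriangular_inj.2 ⟨rfl, rfl, by linear_combination -h⟩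

/-- The cosets `M1(ℓ1,Q1)·H1` and `M2(ℓ2,Q2)·H2` intersect nontrivially iff
`ℓ1·ℓ2 = Q1 − Q2`. -/
theorem coset_M1_H1_inter_M2_H2 {p : ℕ} [Fact p.Prime]
    (ℓ1 ℓ2 Q1 Q2 : Polynomial (ZMod p))
    (hl1 : ℓ1.degree ≤ 1) (hl2 : ℓ2.degree ≤ 1)
    (hq1 : Q1.degree ≤ 2) (hq2 : Q2.degree ≤ 2) :
    (((M1 ℓ1 Q1 * ·) '' H1 p) ∩ ((M2 ℓ2 Q2 * ·) '' H2 p)).Nonempty ↔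
      ℓ1 * ℓ2 = Q1 - Q2 :=
  coset_M1_H1_inter_M2_H2_general ℓ1 ℓ2 Q1 Q2 hl1 hl2
end

section
/- Let q be a prime power. The bipartite graph B_q on F_q² ⊔ F_q² with (a,b) ~ (c,d) iff ac = b+d is q-regular, and the second largest eigenvalue of its normalized adjacency operator is at most 1/√q. -/
/-!
The graph is bipartite with both sides `F²`; writing `y, z` for the restrictions of `x` to
the two sides, `⟨x, Ax⟩ = 2 ⟨z, My⟩` where `(My)(c, d) = ∑ₐ y(a, ac - d)` sums `y` over the
`q` neighbours of `(c, d)`. Expanding `‖My‖²` and summing over all `(c, d)` first, two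
neighbours `(a, b), (a', b')` with `a ≠ a'` are paired exactly once for each choice of `b, b'`,
while `a = a'` forces `b = b'`; hence `‖My‖² = q‖y‖² + (∑ y)² - ∑ₐ (∑_b y(a, b))²`, so
`‖My‖ ≤ √q ‖y‖` when `y` has mean zero. Splitting off the mean of `y` contributes
`-(∑ y)²/q ≤ 0` to `⟨z, My⟩` because `∑ z = -∑ y`, and AM-GM finishes.
-/

/-- The (0/1-valued) adjacency matrix of the bipartite points–lines graph `B_q` on
`F_q² ⊔ F_q²`: the left vertex `(a,b)` is adjacent to the right vertex `(c,d)` iff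
`a·c = b + d`. -/
def pointsLinesAdj {F : Type*} [Field F] [DecidableEq F] :
    ((F × F) ⊕ (F × F)) → ((F × F) ⊕ (F × F)) → ℝ
  | Sum.inl (a, b), Sum.inr (c, d) => if a * c = b + d then 1 else 0
  | Sum.inr (c, d), Sum.inl (a, b) => if a * c = b + d then 1 else 0
  | _, _ => 0

open Finset

section Mean

variable {ι : Type*} [Fintype ι]

theorem sum_sub_mean (f : ι → ℝ) : ∑ i, (f i - (∑ j, f j) / Fintype.card ι) = 0 := by
  rcases isEmpty_or_nonempty ι with hι | hι
  · simp
  · rw [sum_sub_distrib, sum_const, card_univ, nsmul_eq_mul,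
      mul_div_cancel₀ _ (by positivity), sub_self]

theorem sum_sub_mean_sq_le (f : ι → ℝ) :
    ∑ i, (f i - (∑ j, f j) / Fintype.card ι) ^ 2 ≤ ∑ i, f i ^ 2 := by
  set m := (∑ j, f j) / Fintype.card ι
  have h_expand : ∑ i, (f i - m) ^ 2 = ∑ i, f i ^ 2 - m * ∑ i, (f i - m) - m * ∑ i, f i := by
    simp only [mul_sum, ← sum_sub_distrib]
    exact sum_congr rfl fun i _ => by ring
  have h_mean_sq : 0 ≤ m * ∑ i, f i := by
    rcases isEmpty_or_nonempty ι with hι | hι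
    · simp
    · rw [show ∑ i, f i = m * Fintype.card ι by simp [m], ← mul_assoc]
      exact mul_nonneg (mul_self_nonneg m) (Nat.cast_nonneg _)
  rw [h_expand, sum_sub_mean, mul_zero, sub_zero]
  linarith

end Mean

theorem two_mul_le_mul_sq_add_sq_div {r : ℝ} (hr : 0 < r) (a b : ℝ) :
    2 * a * b ≤ r * a ^ 2 + b ^ 2 / r := by
  rw [← sub_nonneg, show r * a ^ 2 + b ^ 2 / r - 2 * a * b = (r * a - b) ^ 2 / r by
    field_simp; ring]
  positivity

namespace PointsLines

variable {F : Type*} [Field F]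

section Adjacency

variable [DecidableEq F]

@[simp]
theorem adj_inl_inl (p p' : F × F) : pointsLinesAdj (Sum.inl p) (Sum.inl p') = 0 := rfl

@[simp]
theorem adj_inr_inr (l l' : F × F) : pointsLinesAdj (Sum.inr l) (Sum.inr l') = 0 := rfl

theorem adj_inl_inr (p l : F × F) :
    pointsLinesAdj (Sum.inl p) (Sum.inr l) = if p.1 * l.1 = p.2 + l.2 then 1 else 0 := rfl

theorem adj_inr_inl (l p : F × F) :
    pointsLinesAdj (Sum.inr l) (Sum.inl p) = pointsLinesAdj (Sum.inl p) (Sum.inr l) := rfl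

end Adjacency

variable [Fintype F]

def lineSum (y : F × F → ℝ) (l : F × F) : ℝ := ∑ a, y (a, a * l.1 - l.2)

theorem lineSum_add_const (y : F × F → ℝ) (t : ℝ) (l : F × F) :
    lineSum (fun p => y p + t) l = lineSum y l + Fintype.card F * t := by
  simp [lineSum, sum_add_distrib]

theorem sum_lines_mul_self (y : F × F → ℝ) (a : F) :
    ∑ l : F × F, y (a, a * l.1 - l.2) * y (a, a * l.1 - l.2) =
      Fintype.card F * ∑ b, y (a, b) ^ 2 := by
  calc ∑ l : F × F, y (a, a * l.1 - l.2) * y (a, a * l.1 - l.2)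
      = ∑ _c : F, ∑ b, y (a, b) ^ 2 := by
        rw [Fintype.sum_prod_type]
        exact sum_congr rfl fun c _ => by
          simp_rw [sq, ← (Equiv.subLeft (a * c)).sum_comp (fun b => y (a, b) * y (a, b))]
          rfl
    _ = Fintype.card F * ∑ b, y (a, b) ^ 2 := by simp

theorem sum_lines_mul_of_ne (y : F × F → ℝ) {a a' : F} (h : a ≠ a') :
    ∑ l : F × F, y (a, a * l.1 - l.2) * y (a', a' * l.1 - l.2) =
      (∑ b, y (a, b)) * ∑ b, y (a', b) := by
  have h_shift : ∀ c : F, ∑ d, y (a, a * c - d) * y (a', a' * c - d) =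
      ∑ b, y (a, b) * y (a', (a' - a) * c + b) := fun c =>
    (Equiv.subLeft (a * c)).sum_comp (fun b => y (a, b) * y (a', (a' - a) * c + b)) ▸
      sum_congr rfl fun d _ => by simp only [Equiv.subLeft_apply]; ring_nf
  have h_line : ∀ b : F, ∑ c, y (a', (a' - a) * c + b) = ∑ b, y (a', b) := fun b =>
    ((Equiv.mulLeft₀ (a' - a) (sub_ne_zero.mpr h.symm)).trans (Equiv.addRight b)).sum_comp
      (fun b => y (a', b))
  rw [Fintype.sum_prod_type]
  simp_rw [h_shift]
  rw [sum_comm, sum_mul]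
  simp_rw [← mul_sum, h_line]

theorem sum_lineSum_sq (y : F × F → ℝ) :
    ∑ l, lineSum y l ^ 2 = Fintype.card F * ∑ p, y p ^ 2 + (∑ p, y p) ^ 2 -
      ∑ a, (∑ b, y (a, b)) ^ 2 := by
  classical
  set s : F → ℝ := fun a => ∑ b, y (a, b)
  have h_pair : ∀ a a' : F, ∑ l : F × F, y (a, a * l.1 - l.2) * y (a', a' * l.1 - l.2) =
      s a * s a' + if a = a' then Fintype.card F * ∑ b, y (a, b) ^ 2 - s a * s a else 0 := by
    intro a a'
    by_cases h : a = a'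
    · subst h; rw [sum_lines_mul_self]; simp
    · rw [sum_lines_mul_of_ne y h]; simp [h, s]
  calc ∑ l, lineSum y l ^ 2
      = ∑ a, ∑ a', ∑ l : F × F, y (a, a * l.1 - l.2) * y (a', a' * l.1 - l.2) := by
        simp_rw [lineSum, sq, sum_mul_sum]
        rw [sum_comm]
        exact sum_congr rfl fun _ _ => sum_comm
    _ = ∑ a, ∑ a', (s a * s a' +
          if a = a' then Fintype.card F * ∑ b, y (a, b) ^ 2 - s a * s a else 0) := by
        simp_rw [h_pair]
    _ = (∑ a, s a) ^ 2 + ∑ a, (Fintype.card F * ∑ b, y (a, b) ^ 2 - s a ^ 2) := by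
        simp only [sum_add_distrib, sum_ite_eq, mem_univ, if_true, ← mul_sum, ← sum_mul, sq]
    _ = _ := by
        rw [sum_sub_distrib, ← mul_sum, Fintype.sum_prod_type (f := y),
          Fintype.sum_prod_type (f := fun p => y p ^ 2)]
        ring

theorem sum_lineSum_sq_le {y : F × F → ℝ} (hy : ∑ p, y p = 0) :
    ∑ l, lineSum y l ^ 2 ≤ Fintype.card F * ∑ p, y p ^ 2 := by
  rw [sum_lineSum_sq, hy]
  have : 0 ≤ ∑ a, (∑ b, y (a, b)) ^ 2 := sum_nonneg fun _ _ => sq_nonneg _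
  linarith

theorem two_mul_sum_mul_lineSum_le {y z : F × F → ℝ} (h : ∑ p, y p + ∑ l, z l = 0) :
    2 * ∑ l, z l * lineSum y l ≤ √(Fintype.card F) * (∑ p, y p ^ 2 + ∑ l, z l ^ 2) := by
  set q : ℝ := (Fintype.card F : ℝ)
  set r := √q
  have hq : 0 < q := by simp [q, Fintype.card_pos]
  have hr : 0 < r := Real.sqrt_pos.mpr hq
  set m := (∑ p, y p) / Fintype.card (F × F)
  set y' : F × F → ℝ := fun p => y p - m
  have hy'_sq : ∑ p, y' p ^ 2 ≤ ∑ p, y p ^ 2 := sum_sub_mean_sq_le y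
  have h_split : ∀ l, lineSum y l = lineSum y' l + q * m := fun l => by
    simp [← lineSum_add_const, y', q]
  have h_mean_part : ∑ l, z l * (q * m) ≤ 0 := by
    have h_card : (Fintype.card (F × F) : ℝ) = q ^ 2 := by simp [q, sq]
    have h_eq : ∑ l, z l * (q * m) = -((∑ p, y p) ^ 2 / q) := by
      rw [← sum_mul, show ∑ l, z l = -∑ p, y p by linarith]
      simp only [m, h_card]
      field_simp
    rw [h_eq]
    exact neg_nonpos.mpr (by positivity)
  have h_centred : 2 * ∑ l, z l * lineSum y' l ≤ r * (∑ p, y' p ^ 2 + ∑ l, z l ^ 2) :=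
    calc 2 * ∑ l, z l * lineSum y' l = ∑ l, 2 * z l * lineSum y' l := by
          rw [mul_sum]; simp_rw [mul_assoc]
      _ ≤ ∑ l, (r * z l ^ 2 + lineSum y' l ^ 2 / r) :=
          sum_le_sum fun l _ => two_mul_le_mul_sq_add_sq_div hr _ _
      _ = r * ∑ l, z l ^ 2 + (∑ l, lineSum y' l ^ 2) / r := by
          rw [sum_add_distrib, mul_sum, sum_div]
      _ ≤ r * ∑ l, z l ^ 2 + q * (∑ p, y' p ^ 2) / r := by
          gcongr
          exact sum_lineSum_sq_le (sum_sub_mean y)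
      _ = r * (∑ p, y' p ^ 2 + ∑ l, z l ^ 2) := by
          rw [← show r ^ 2 = q from Real.sq_sqrt hq.le]
          field_simp
          ring
  calc 2 * ∑ l, z l * lineSum y l
      = 2 * ∑ l, z l * lineSum y' l + 2 * ∑ l, z l * (q * m) := by
        simp_rw [h_split, mul_add, sum_add_distrib, mul_add]
    _ ≤ r * (∑ p, y' p ^ 2 + ∑ l, z l ^ 2) := by linarith
    _ ≤ r * (∑ p, y p ^ 2 + ∑ l, z l ^ 2) := by gcongr

section Adjacency

variable [DecidableEq F]

theorem sum_adj_inl_inr_mul (y : F × F → ℝ) (l : F × F) :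
    ∑ p, pointsLinesAdj (Sum.inl p) (Sum.inr l) * y p = lineSum y l := by
  rw [Fintype.sum_prod_type]
  refine sum_congr rfl fun a _ => ?_
  simp_rw [adj_inl_inr, ite_mul, one_mul, zero_mul, eq_comm (a := a * l.1),
    ← eq_sub_iff_add_eq, sum_ite_eq', mem_univ, if_true]

theorem sum_adj_inl_inr (p : F × F) :
    ∑ l, pointsLinesAdj (Sum.inl p) (Sum.inr l) = Fintype.card F := by
  rw [Fintype.sum_prod_type]
  simp_rw [adj_inl_inr, eq_comm (a := p.1 * _), add_comm p.2, ← eq_sub_iff_add_eq,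
    sum_ite_eq', mem_univ, if_true, sum_const, card_univ, nsmul_one]

theorem sum_adj (v : (F × F) ⊕ (F × F)) : ∑ w, pointsLinesAdj v w = Fintype.card F := by
  rcases v with p | l
  · simp [Fintype.sum_sum_type, sum_adj_inl_inr]
  · simpa [Fintype.sum_sum_type, adj_inr_inl, lineSum] using sum_adj_inl_inr_mul (fun _ => 1) l

theorem sum_mul_sum_adj_mul (x : (F × F) ⊕ (F × F) → ℝ) :
    ∑ v, x v * ∑ w, pointsLinesAdj v w * x w =
      2 * ∑ l, x (Sum.inr l) * lineSum (fun p => x (Sum.inl p)) l := by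
  have h_left : ∑ p, x (Sum.inl p) * ∑ l, pointsLinesAdj (Sum.inl p) (Sum.inr l) * x (Sum.inr l)
      = ∑ l, x (Sum.inr l) * ∑ p, pointsLinesAdj (Sum.inl p) (Sum.inr l) * x (Sum.inl p) := by
    simp_rw [mul_sum]
    exact sum_comm.trans (sum_congr rfl fun _ _ => sum_congr rfl fun _ _ => by ring)
  simp only [Fintype.sum_sum_type, adj_inl_inl, adj_inr_inr, adj_inr_inl, zero_mul,
    sum_const_zero, zero_add, add_zero, h_left, sum_adj_inl_inr_mul]
  ring

end Adjacency

end PointsLines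

/-- The graph `B_q` is `q`-regular, and the second largest eigenvalue of its normalized
adjacency operator is at most `1/√q`: for every vector `x` orthogonal to the constant vector,
`⟨x, Ax⟩ ≤ (1/√q)·⟨x, x⟩` where `A` is the adjacency matrix divided by the degree `q`. -/
theorem pointsLines_regular_and_spectral_gap {F : Type*} [Field F] [Fintype F] [DecidableEq F] :
    (∀ v : (F × F) ⊕ (F × F), ∑ w, pointsLinesAdj v w = (Fintype.card F : ℝ)) ∧
    (∀ x : ((F × F) ⊕ (F × F)) → ℝ, (∑ v, x v = 0) →
      ∑ v, x v * ((∑ w, pointsLinesAdj v w * x w) / (Fintype.card F : ℝ)) ≤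
        (1 / Real.sqrt (Fintype.card F)) * ∑ v, (x v) ^ 2) := by
  refine ⟨PointsLines.sum_adj, fun x hx => ?_⟩
  have hq : (0 : ℝ) < Fintype.card F := by simp [Fintype.card_pos]
  rw [Fintype.sum_sum_type] at hx
  calc ∑ v, x v * ((∑ w, pointsLinesAdj v w * x w) / Fintype.card F)
      = (2 * ∑ l, x (Sum.inr l) * PointsLines.lineSum (fun p => x (Sum.inl p)) l) /
          Fintype.card F := by
        simp_rw [← mul_div_assoc]
        rw [← sum_div, PointsLines.sum_mul_sum_adj_mul]
    _ ≤ √(Fintype.card F) * (∑ p, x (Sum.inl p) ^ 2 + ∑ l, x (Sum.inr l) ^ 2) /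
          Fintype.card F :=
        div_le_div_of_nonneg_right (PointsLines.two_mul_sum_mul_lineSum_le hx) hq.le
    _ = 1 / √(Fintype.card F) * ∑ v, x v ^ 2 := by
        rw [Fintype.sum_sum_type]
        nth_rewrite 2 [← Real.sq_sqrt hq.le]
        field_simp
end

section
/- Let A be a self-adjoint operator (with respect to a given inner product) on functions on the vertices of a finite connected weighted graph, given by the random-walk averaging operator Af(v) = E_{u~v}[f(u)]. Suppose for every vertex v, the local averaging operator A_v on the link of v satisfies ⟨A_v f, f⟩ ≤ λ⟨f,f⟩ for all f orthogonal to constants on the link, where λ < 1/2. Then for every g orthogonal to constants on the whole graph, ⟨Ag, g⟩ ≤ (λ/(1−λ))·⟨g,g⟩. -/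
/-!
Garland's method. For a vertex `v`, apply the link bound to `g` minus its mean `(Ag)(v)` over the
link of `v`; summing over `v` gives `⟨Ag, g⟩ - ‖Ag‖² ≤ λ (‖g‖² - ‖Ag‖²)` for every `g`. For an
eigenfunction `g ⊥ 𝟙` with eigenvalue `μ` this reads `μ - μ² ≤ λ (1 - μ²)`, and connectivity
forces `μ < 1` (the Dirichlet form `‖g‖² - ⟨Ag, g⟩` vanishes only on constants), so
`μ ≤ λ / (1 - λ)`. Since `A = D⁻¹ K` (edge weights `K`, vertex weights `D`) is self-adjoint and
preserves `𝟙^⊥`, the spectral theorem for `D^{-1/2} K D^{-1/2}` on the orthogonal complement of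
`D^{1/2} 𝟙` turns this bound on eigenvalues into the bound on the quadratic form.
-/

open Finset

/-- The weight of the (ordered) edge `(v,u)` in a weighted 2-dimensional simplicial complex
whose balanced weights are given by a probability distribution `m` on ordered triangles. -/
noncomputable def edgeWt {V : Type*} [Fintype V] (m : V → V → V → ℝ) (v u : V) : ℝ :=
  ∑ w, m v u w

/-- The weight of the vertex `v`. -/
noncomputable def vertWt {V : Type*} [Fintype V] (m : V → V → V → ℝ) (v : V) : ℝ :=
  ∑ u, edgeWt m v u

open Matrix WithLp

section

variable {E : Type*} [NormedAddCommGroup E] [InnerProductSpace ℝ E] [FiniteDimensional ℝ E]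
  {T : E →ₗ[ℝ] E} {ρ : ℝ}

theorem LinearMap.IsSymmetric.inner_le_of_eigenvalue_le (hT : T.IsSymmetric)
    (h : ∀ μ x, x ≠ 0 → T x = μ • x → μ ≤ ρ) (x : E) :
    inner ℝ (T x) x ≤ ρ * ‖x‖ ^ 2 := by
  set b := hT.eigenvectorBasis rfl
  have hμ : ∀ i, hT.eigenvalues rfl i ≤ ρ := fun i =>
    h _ _ (b.orthonormal.ne_zero i) (hT.apply_eigenvectorBasis rfl i)
  calc inner ℝ (T x) x = ∑ i, hT.eigenvalues rfl i * b.repr x i ^ 2 := by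
        rw [← b.repr.inner_map_map, EuclideanSpace.inner_eq_star_dotProduct]
        simp only [dotProduct, hT.eigenvectorBasis_apply_self_apply, b, star_trivial,
          RCLike.ofReal_real_eq_id, id_eq]
        exact Finset.sum_congr rfl fun i _ => by ring
    _ ≤ ∑ i, ρ * b.repr x i ^ 2 := by gcongr with i; exact hμ i
    _ = ρ * ‖x‖ ^ 2 := by
        rw [← Finset.mul_sum, ← b.repr.norm_map, EuclideanSpace.norm_sq_eq]; simp

theorem LinearMap.IsSymmetric.inner_le_of_eigenvalue_le_of_mapsTo (hT : T.IsSymmetric)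
    {P : Submodule ℝ E} (hP : ∀ x ∈ P, T x ∈ P)
    (h : ∀ μ x, x ∈ P → x ≠ 0 → T x = μ • x → μ ≤ ρ) {x : E} (hx : x ∈ P) :
    inner ℝ (T x) x ≤ ρ * ‖x‖ ^ 2 :=
  (hT.restrict_invariant hP).inner_le_of_eigenvalue_le
    (fun μ y hy hTy => h μ y y.2 (by simpa using hy) (by simpa using congrArg Subtype.val hTy))
    ⟨x, hx⟩

end

namespace Matrix

variable {V : Type*} [Fintype V] (K : Matrix V V ℝ)

def degree (v : V) : ℝ := ∑ u, K v u

def IsOneSidedExpander (lam : ℝ) : Prop :=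
  ∀ g : V → ℝ, ∑ v, K.degree v * g v = 0 → g ⬝ᵥ K *ᵥ g ≤ lam * ∑ v, K.degree v * g v ^ 2

variable {K}

-- Rows of zero degree vanish, so the junk value `x / 0 = 0` is harmless here.
theorem degree_mul_mulVec_div_degree (hK : ∀ u v, 0 ≤ K u v) (g : V → ℝ) (v : V) :
    K.degree v * ((K *ᵥ g) v / K.degree v) = (K *ᵥ g) v := by
  by_cases h : K.degree v = 0
  · have hrow : ∀ u, K v u = 0 := fun u =>
      (Finset.sum_eq_zero_iff_of_nonneg fun u _ => hK v u).mp h u (mem_univ u)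
    simp [h, mulVec, dotProduct, hrow]
  · exact mul_div_cancel₀ _ h

theorem isOneSidedExpander_of_normalized (hK : ∀ u v, 0 ≤ K u v) {lam : ℝ}
    (hD : 0 < ∑ u, K.degree u)
    (h : ∀ f : V → ℝ, ∑ u, (K.degree u / ∑ u, K.degree u) * f u = 0 →
      ∑ u, (K.degree u / ∑ u, K.degree u) * ((∑ w, K u w * f w) / K.degree u) * f u ≤
        lam * ∑ u, (K.degree u / ∑ u, K.degree u) * f u ^ 2) :
    K.IsOneSidedExpander lam := by
  set D := ∑ u, K.degree u
  have hnorm (c : V → ℝ) : ∑ u, K.degree u / D * c u = (∑ u, K.degree u * c u) / D := by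
    simp only [div_mul_eq_mul_div, Finset.sum_div]
  intro f hf
  have hloc := h f (by rw [hnorm, hf, zero_div])
  have havg : ∀ u, K.degree u / D * ((∑ w, K u w * f w) / K.degree u) * f u
      = f u * (K *ᵥ f) u / D := fun u => by
    rw [div_mul_eq_mul_div, div_mul_eq_mul_div, mul_comm (f u)]
    exact congrArg (· * f u / D) (degree_mul_mulVec_div_degree hK f u)
  rw [Finset.sum_congr rfl fun u _ => havg u, ← Finset.sum_div, hnorm, ← mul_div_assoc] at hloc
  exact (div_le_div_iff_of_pos_right hD).mp hloc

theorem mulVec_one_eq_degree : K *ᵥ 1 = K.degree :=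
  funext fun v => by simp [mulVec, dotProduct, degree]

theorem sum_degree_mul_eq_sum_mulVec (hK : K.IsSymm) (g : V → ℝ) :
    ∑ v, K.degree v * g v = ∑ v, (K *ᵥ g) v := by
  simp only [degree, mulVec, dotProduct, Finset.sum_mul]
  rw [Finset.sum_comm]
  exact Finset.sum_congr rfl fun v _ => Finset.sum_congr rfl fun u _ => by rw [hK.apply]

theorem sum_degree_mul_sq_sub_dotProduct_mulVec (hK : K.IsSymm) (g : V → ℝ) :
    ∑ v, K.degree v * g v ^ 2 - g ⬝ᵥ K *ᵥ g = (∑ v, ∑ u, K v u * (g u - g v) ^ 2) / 2 := by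
  have h := sum_degree_mul_eq_sum_mulVec hK (g ^ 2)
  have expand : ∀ v u, K v u * (g u - g v) ^ 2
      = K v u * g u ^ 2 + K v u * g v ^ 2 - 2 * (g v * (K v u * g u)) := fun v u => by ring
  simp only [degree, mulVec, dotProduct, Pi.pow_apply, Finset.sum_mul] at h ⊢
  simp only [expand, Finset.sum_add_distrib, Finset.sum_sub_distrib, ← Finset.mul_sum]
  linarith

theorem dotProduct_mulVec_lt_of_reflTransGen (hK : K.IsSymm) (hK0 : ∀ u v, 0 ≤ K u v)
    (hd : ∀ v, 0 < K.degree v)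
    (hconn : ∀ u v, Relation.ReflTransGen (fun a b => a ≠ b ∧ K a b ≠ 0) u v)
    {g : V → ℝ} (hg : g ≠ 0) (horth : ∑ v, K.degree v * g v = 0) :
    g ⬝ᵥ K *ᵥ g < ∑ v, K.degree v * g v ^ 2 := by
  obtain ⟨v₀, hv₀⟩ := Function.ne_iff.mp hg
  by_contra! hle
  have hterm : ∀ a b, K a b * (g b - g a) ^ 2 = 0 := by
    have hsum : ∑ a, ∑ b, K a b * (g b - g a) ^ 2 = 0 := by
      have := sum_degree_mul_sq_sub_dotProduct_mulVec hK g
      have := Finset.sum_nonneg fun a (_ : a ∈ univ) => Finset.sum_nonneg fun b (_ : b ∈ univ) =>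
        mul_nonneg (hK0 a b) (sq_nonneg (g b - g a))
      linarith
    intro a b
    have hrow := (Finset.sum_eq_zero_iff_of_nonneg fun a _ => Finset.sum_nonneg fun b _ =>
      mul_nonneg (hK0 a b) (sq_nonneg (g b - g a))).mp hsum a (mem_univ a)
    exact (Finset.sum_eq_zero_iff_of_nonneg fun b _ =>
      mul_nonneg (hK0 a b) (sq_nonneg (g b - g a))).mp hrow b (mem_univ b)
  have hconst : ∀ v, g v = g v₀ := fun v => by
    induction hconn v₀ v with
    | refl => rfl
    | @tail b c _ hbc ih =>
      have hsq := (mul_eq_zero.mp (hterm b c)).resolve_left hbc.2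
      rw [← ih, ← sub_eq_zero, pow_eq_zero_iff two_ne_zero |>.mp hsq]
  have hD : 0 < ∑ v, K.degree v := Finset.sum_pos (fun v _ => hd v) ⟨v₀, mem_univ v₀⟩
  simp only [hconst, ← Finset.sum_mul] at horth
  exact hv₀ ((mul_eq_zero.mp horth).resolve_left hD.ne')

theorem IsOneSidedExpander.sub_mean_le {lam : ℝ} (hexp : K.IsOneSidedExpander lam)
    (hK : K.IsSymm) (hD : 0 < ∑ v, K.degree v) (g : V → ℝ) :
    g ⬝ᵥ K *ᵥ g - (∑ v, K.degree v * g v) ^ 2 / ∑ v, K.degree v ≤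
      lam * (∑ v, K.degree v * g v ^ 2 - (∑ v, K.degree v * g v) ^ 2 / ∑ v, K.degree v) := by
  set D := ∑ v, K.degree v
  set S := ∑ v, K.degree v * g v
  set c := S / D
  have hcD : c * D = S := div_mul_cancel₀ S hD.ne'
  have hcS : S ^ 2 / D = c * S := by ring
  set f : V → ℝ := g - c • 1
  have horth : ∑ v, K.degree v * f v = 0 := by
    simp only [f, Pi.sub_apply, Pi.smul_apply, Pi.one_apply, smul_eq_mul, mul_one, mul_sub,
      Finset.sum_sub_distrib, ← Finset.sum_mul]
    linarith
  have henergy : f ⬝ᵥ K *ᵥ f = g ⬝ᵥ K *ᵥ g - 2 * c * S + c * c * D := by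
    have h1 : 1 ⬝ᵥ K *ᵥ g = S := by
      rw [one_dotProduct, ← sum_degree_mul_eq_sum_mulVec hK]
    have h2 : g ⬝ᵥ K *ᵥ 1 = S := by
      rw [mulVec_one_eq_degree, dotProduct_comm]; rfl
    have h3 : (1 : V → ℝ) ⬝ᵥ K *ᵥ 1 = D := by
      rw [mulVec_one_eq_degree, one_dotProduct]
    simp only [f, mulVec_sub, mulVec_smul, sub_dotProduct, dotProduct_sub, smul_dotProduct,
      dotProduct_smul, h1, h2, h3, smul_eq_mul]
    ring
  have hnorm : ∑ v, K.degree v * f v ^ 2 = ∑ v, K.degree v * g v ^ 2 - 2 * c * S + c * c * D := by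
    have expand : ∀ v, K.degree v * f v ^ 2
        = K.degree v * g v ^ 2 - 2 * c * (K.degree v * g v) + c * c * K.degree v := fun v => by
      simp only [f, Pi.sub_apply, Pi.smul_apply, Pi.one_apply, smul_eq_mul, mul_one]; ring
    simp only [expand, Finset.sum_add_distrib, Finset.sum_sub_distrib, ← Finset.mul_sum]
    rfl
  have := hexp f horth
  rw [henergy, hnorm, ← hcD] at this
  rw [hcS, ← hcD]
  linarith

variable (K) in
noncomputable def normAdj : Matrix V V ℝ := of fun v u => K v u / (√(K.degree v) * √(K.degree u))

variable (K) in
noncomputable def degreeIsometry (g : V → ℝ) : EuclideanSpace ℝ V :=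
  toLp 2 fun v => √(K.degree v) * g v

theorem normAdj_isHermitian (hK : K.IsSymm) : K.normAdj.IsHermitian := by
  ext v u
  simp [normAdj, hK.apply v u, mul_comm]

theorem inner_degreeIsometry (hd : ∀ v, 0 ≤ K.degree v) (f g : V → ℝ) :
    inner ℝ (K.degreeIsometry f) (K.degreeIsometry g) = ∑ v, K.degree v * f v * g v := by
  simp only [degreeIsometry, EuclideanSpace.inner_toLp_toLp, dotProduct, star_trivial]
  exact Finset.sum_congr rfl fun v _ => by
    rw [mul_mul_mul_comm, Real.mul_self_sqrt (hd v)]; ring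

theorem degreeIsometry_div_sqrt_degree (hd : ∀ v, 0 < K.degree v) (x : EuclideanSpace ℝ V) :
    K.degreeIsometry (fun v => x v / √(K.degree v)) = x := by
  ext v
  simp [degreeIsometry, mul_div_cancel₀ _ (Real.sqrt_pos.mpr (hd v)).ne']

theorem toEuclideanLin_normAdj_degreeIsometry [DecidableEq V] (hd : ∀ v, 0 < K.degree v)
    (g : V → ℝ) :
    toEuclideanLin K.normAdj (K.degreeIsometry g) =
      K.degreeIsometry fun v => (K *ᵥ g) v / K.degree v := by
  rw [toLpLin_apply, degreeIsometry, degreeIsometry, ofLp_toLp]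
  congr 1
  funext v
  simp only [normAdj, mulVec, dotProduct, of_apply, Finset.sum_div, Finset.mul_sum]
  refine Finset.sum_congr rfl fun u _ => ?_
  have := (Real.sqrt_pos.mpr (hd u)).ne'
  have := (Real.sqrt_pos.mpr (hd v)).ne'
  field_simp
  rw [Real.sq_sqrt (hd v).le]
  field_simp [(hd v).ne']

theorem isOneSidedExpander_of_eigenvalue_le (hK : K.IsSymm) (hd : ∀ v, 0 < K.degree v) {ρ : ℝ}
    (h : ∀ μ (g : V → ℝ), g ≠ 0 → ∑ v, K.degree v * g v = 0 →
      (∀ v, (K *ᵥ g) v = μ * (K.degree v * g v)) → μ ≤ ρ) :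
    K.IsOneSidedExpander ρ := by
  classical
  set T := toEuclideanLin K.normAdj
  have hT : T.IsSymmetric := isSymmetric_toEuclideanLin_iff.mpr (normAdj_isHermitian hK)
  have hTψ : T (K.degreeIsometry 1) = K.degreeIsometry 1 := by
    rw [toEuclideanLin_normAdj_degreeIsometry hd, mulVec_one_eq_degree]
    congr 1
    funext v
    simp [div_self (hd v).ne']
  set P := (ℝ ∙ K.degreeIsometry 1)ᗮ
  have hmem (g : V → ℝ) : K.degreeIsometry g ∈ P ↔ ∑ v, K.degree v * g v = 0 := by
    rw [Submodule.mem_orthogonal_singleton_iff_inner_right,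
      inner_degreeIsometry fun v => (hd v).le]
    simp
  have hP : ∀ x ∈ P, T x ∈ P := fun x hx => by
    rw [Submodule.mem_orthogonal_singleton_iff_inner_right] at hx ⊢
    rw [← hT, hTψ, hx]
  have heig : ∀ μ x, x ∈ P → x ≠ 0 → T x = μ • x → μ ≤ ρ := by
    intro μ x hxP hx0 hTx
    obtain ⟨g, rfl⟩ : ∃ g, K.degreeIsometry g = x := ⟨_, degreeIsometry_div_sqrt_degree hd x⟩
    refine h μ g (fun hg => hx0 (by rw [hg]; ext; simp [degreeIsometry])) ((hmem g).mp hxP)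
      fun v => ?_
    rw [toEuclideanLin_normAdj_degreeIsometry hd] at hTx
    have hv := congrArg (fun y : EuclideanSpace ℝ V => y v) hTx
    simp only [degreeIsometry, PiLp.smul_apply, smul_eq_mul, mul_left_comm μ] at hv
    have hAg := mul_left_cancel₀ (Real.sqrt_pos.mpr (hd v)).ne' hv
    rw [div_eq_iff (hd v).ne'] at hAg
    rw [hAg]
    ring
  intro g hg
  have := hT.inner_le_of_eigenvalue_le_of_mapsTo hP heig ((hmem g).mpr hg)
  rw [toEuclideanLin_normAdj_degreeIsometry hd, inner_degreeIsometry fun v => (hd v).le,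
    ← real_inner_self_eq_norm_sq, inner_degreeIsometry fun v => (hd v).le] at this
  convert this using 1
  · exact Finset.sum_congr rfl fun v _ => by field_simp [(hd v).ne']
  · simp_rw [sq, mul_assoc]

end Matrix

-- The link of `v` is the weighted graph with weight matrix `m v`: its degrees are
-- `edgeWt m v` and its total weight is `vertWt m v`.
theorem link_isSymm {V : Type*} {m : V → V → V → ℝ} (hsymm2 : ∀ u v w, m u v w = m u w v)
    (v : V) : IsSymm (m v) :=
  IsSymm.ext fun u w => hsymm2 v w u

section

variable {V : Type*} [Fintype V] {m : V → V → V → ℝ}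

theorem edgeWt_isSymm (hsymm1 : ∀ u v w, m u v w = m v u w) : IsSymm (edgeWt m) :=
  IsSymm.ext fun u v => Finset.sum_congr rfl fun w _ => hsymm1 v u w

theorem sum_dotProduct_link_mulVec (hsymm1 : ∀ u v w, m u v w = m v u w)
    (hsymm2 : ∀ u v w, m u v w = m u w v) (g : V → ℝ) :
    ∑ v, g ⬝ᵥ m v *ᵥ g = g ⬝ᵥ edgeWt m *ᵥ g := by
  simp only [dotProduct, mulVec, edgeWt, Finset.mul_sum, Finset.sum_mul]
  rw [Finset.sum_comm]
  refine Finset.sum_congr rfl fun u _ => ?_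
  rw [Finset.sum_comm]
  refine Finset.sum_congr rfl fun w _ => Finset.sum_congr rfl fun v _ => ?_
  rw [hsymm1, hsymm2]

theorem dotProduct_edgeWt_mulVec_sub_le (hsymm1 : ∀ u v w, m u v w = m v u w)
    (hsymm2 : ∀ u v w, m u v w = m u w v) (hpos : ∀ v, 0 < vertWt m v) {lam : ℝ}
    (hlinks : ∀ v, IsOneSidedExpander (m v) lam) (g : V → ℝ) :
    g ⬝ᵥ edgeWt m *ᵥ g - ∑ v, (edgeWt m *ᵥ g) v ^ 2 / vertWt m v ≤
      lam * (∑ v, vertWt m v * g v ^ 2 - ∑ v, (edgeWt m *ᵥ g) v ^ 2 / vertWt m v) := by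
  have hsum := Finset.sum_le_sum fun v (_ : v ∈ univ) =>
    (hlinks v).sub_mean_le (link_isSymm hsymm2 v) (hpos v) g
  rw [Finset.sum_sub_distrib, ← Finset.mul_sum, Finset.sum_sub_distrib,
    sum_dotProduct_link_mulVec hsymm1 hsymm2] at hsum
  have hnorm : ∑ v, ∑ u, degree (m v) u * g u ^ 2 = ∑ v, vertWt m v * g v ^ 2 :=
    (sum_degree_mul_eq_sum_mulVec (edgeWt_isSymm hsymm1) fun u => g u ^ 2).symm
  rw [hnorm] at hsum
  exact hsum

theorem eigenvalue_le_of_links (hnn : ∀ u v w, 0 ≤ m u v w)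
    (hsymm1 : ∀ u v w, m u v w = m v u w) (hsymm2 : ∀ u v w, m u v w = m u w v)
    (hpos : ∀ v, 0 < vertWt m v)
    (hconn : ∀ u v : V, Relation.ReflTransGen (fun a b => a ≠ b ∧ edgeWt m a b ≠ 0) u v)
    {lam : ℝ} (hlam : lam < 1) (hlinks : ∀ v, IsOneSidedExpander (m v) lam)
    {μ : ℝ} {g : V → ℝ} (hg : g ≠ 0) (horth : ∑ v, vertWt m v * g v = 0)
    (heig : ∀ v, (edgeWt m *ᵥ g) v = μ * (vertWt m v * g v)) :
    μ ≤ lam / (1 - lam) := by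
  set N := ∑ v, vertWt m v * g v ^ 2
  have hN : 0 < N := by
    obtain ⟨v₀, hv₀⟩ := Function.ne_iff.mp hg
    exact Finset.sum_pos' (fun v _ => mul_nonneg (hpos v).le (sq_nonneg _))
      ⟨v₀, mem_univ v₀, mul_pos (hpos v₀) (sq_pos_iff.mpr hv₀)⟩
  have henergy : g ⬝ᵥ edgeWt m *ᵥ g = μ * N := by
    simp only [dotProduct, heig, N, Finset.mul_sum]
    exact Finset.sum_congr rfl fun v _ => by ring
  have hsq : ∑ v, (edgeWt m *ᵥ g) v ^ 2 / vertWt m v = μ ^ 2 * N := by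
    simp only [heig, N, Finset.mul_sum]
    exact Finset.sum_congr rfl fun v _ => by field_simp [(hpos v).ne']
  have hμ : μ < 1 := by
    have := dotProduct_mulVec_lt_of_reflTransGen (edgeWt_isSymm hsymm1)
      (fun u v => Finset.sum_nonneg fun w _ => hnn u v w) hpos hconn hg horth
    rw [henergy] at this
    exact (mul_lt_iff_lt_one_left hN).mp this
  have hgarland := dotProduct_edgeWt_mulVec_sub_le hsymm1 hsymm2 hpos hlinks g
  rw [henergy, hsq] at hgarland
  have hquad : μ - μ ^ 2 ≤ lam * (1 - μ ^ 2) :=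
    le_of_mul_le_mul_right (by linarith) hN
  rw [le_div_iff₀ (by linarith)]
  nlinarith

end

theorem trickle_down_positive_general {V : Type*} [Fintype V]
    (m : V → V → V → ℝ)
    (hnn : ∀ u v w, 0 ≤ m u v w)
    (hsymm1 : ∀ u v w, m u v w = m v u w)
    (hsymm2 : ∀ u v w, m u v w = m u w v)
    (hpos : ∀ v, 0 < vertWt m v)
    -- the 1-skeleton is connected
    (hconn : ∀ u v : V, Relation.ReflTransGen (fun a b => a ≠ b ∧ edgeWt m a b ≠ 0) u v)
    (lam : ℝ) (hlam : lam < 1 / 2)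
    -- every link is a one-sided λ-spectral expander
    (hlocal : ∀ v : V, ∀ f : V → ℝ,
      (∑ u, (edgeWt m v u / vertWt m v) * f u = 0) →
      ∑ u, (edgeWt m v u / vertWt m v) *
          ((∑ w, m v u w * f w) / edgeWt m v u) * f u ≤
        lam * ∑ u, (edgeWt m v u / vertWt m v) * f u ^ 2) :
    ∀ g : V → ℝ, (∑ v, vertWt m v * g v = 0) →
      ∑ v, vertWt m v * ((∑ u, edgeWt m v u * g u) / vertWt m v) * g v ≤
        (lam / (1 - lam)) * ∑ v, vertWt m v * g v ^ 2 := by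
  have hlinks : ∀ v, IsOneSidedExpander (m v) lam := fun v =>
    isOneSidedExpander_of_normalized (hnn v) (hpos v) (hlocal v)
  have hglobal : IsOneSidedExpander (edgeWt m) (lam / (1 - lam)) :=
    isOneSidedExpander_of_eigenvalue_le (edgeWt_isSymm hsymm1) hpos fun _ _ hg horth heig =>
      eigenvalue_le_of_links hnn hsymm1 hsymm2 hpos hconn (by linarith) hlinks hg horth heig
  intro g hg
  calc ∑ v, vertWt m v * ((∑ u, edgeWt m v u * g u) / vertWt m v) * g v
      = g ⬝ᵥ edgeWt m *ᵥ g :=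
        Finset.sum_congr rfl fun v _ => by rw [mul_div_cancel₀ _ (hpos v).ne', mul_comm]; rfl
    _ ≤ _ := hglobal g hg

/-- Trickle-down, positive direction (Oppenheim). `(X,w)` is a weighted 2-dimensional
simplicial complex on vertex set `V`, presented by the symmetric probability distribution `m`
on ordered triangles (this encodes the balanced weight function). `A` is the random-walk
averaging operator `Ag(v) = E_{u~v}[g(u)]` and, for each vertex `v`, `A_v` is the averaging
operator of the link of `v` with the induced normalized weights. If the 1-skeleton is
connected and every link satisfies `⟨A_v f, f⟩ ≤ λ⟨f,f⟩` for all `f ⊥ 𝟙` on the link, with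
`λ < 1/2`, then `⟨Ag, g⟩ ≤ (λ/(1−λ))·⟨g,g⟩` for every `g ⊥ 𝟙` on the whole vertex set. -/
theorem trickle_down_positive {V : Type*} [Fintype V] [DecidableEq V]
    (m : V → V → V → ℝ)
    (hnn : ∀ u v w, 0 ≤ m u v w)
    (hsymm1 : ∀ u v w, m u v w = m v u w)
    (hsymm2 : ∀ u v w, m u v w = m u w v)
    (hdist : ∀ u v w, (u = v ∨ v = w ∨ u = w) → m u v w = 0)
    (hsum : ∑ u, ∑ v, ∑ w, m u v w = 1)
    (hpos : ∀ v, 0 < vertWt m v)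
    -- the 1-skeleton is connected
    (hconn : ∀ u v : V, Relation.ReflTransGen (fun a b => a ≠ b ∧ edgeWt m a b ≠ 0) u v)
    (lam : ℝ) (hlam : lam < 1 / 2)
    -- every link is a one-sided λ-spectral expander
    (hlocal : ∀ v : V, ∀ f : V → ℝ,
      (∑ u, (edgeWt m v u / vertWt m v) * f u = 0) →
      ∑ u, (edgeWt m v u / vertWt m v) *
          ((∑ w, m v u w * f w) / edgeWt m v u) * f u ≤
        lam * ∑ u, (edgeWt m v u / vertWt m v) * f u ^ 2) :
    ∀ g : V → ℝ, (∑ v, vertWt m v * g v = 0) →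
      ∑ v, vertWt m v * ((∑ u, edgeWt m v u * g u) / vertWt m v) * g v ≤
        (lam / (1 - lam)) * ∑ v, vertWt m v * g v ^ 2 :=
  trickle_down_positive_general m hnn hsymm1 hsymm2 hpos hconn lam hlam hlocal
end

section
/- With the same setup as the trickle-down theorem, suppose for every vertex v the local operator satisfies ⟨A_v f, f⟩ ≥ η⟨f,f⟩ for all f on the link of v (where η ∈ [−1, 0)). Then for every g on X(0), ⟨Ag, g⟩ ≥ (η/(1−η))·⟨g,g⟩. -/
/-!
Apply the local bound at each vertex `v` to the shifted function `u ↦ g u + t * g v` and sum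
over `v`. Since the local forms average to the global ones, this gives, for every real `t`,
`η ((1 + t²) ⟨g, g⟩ + 2t ⟨Ag, g⟩) ≤ (1 + 2t) ⟨Ag, g⟩ + t² ⟨g, g⟩`,
and the choice `t = η / (η - 1)` turns it into `⟨Ag, g⟩ ≥ η / (1 - η) ⟨g, g⟩`.
-/

open Finset

noncomputable section

variable {V : Type*} [Fintype V]

/- `vertWt m v` times `⟨A_v f, f⟩` and `⟨f, f⟩` on the link of `v`, and the global
`⟨A g, g⟩` and `⟨g, g⟩`, all with the normalising denominators cleared. -/

def localForm (m : V → V → V → ℝ) (v : V) (f : V → ℝ) : ℝ :=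
  ∑ u, (∑ w, m v u w * f w) * f u

def localNormSq (m : V → V → V → ℝ) (v : V) (f : V → ℝ) : ℝ :=
  ∑ u, edgeWt m v u * f u ^ 2

def globalForm (m : V → V → V → ℝ) (g : V → ℝ) : ℝ :=
  ∑ v, (∑ u, edgeWt m v u * g u) * g v

def globalNormSq (m : V → V → V → ℝ) (g : V → ℝ) : ℝ :=
  ∑ v, vertWt m v * g v ^ 2

variable {m : V → V → V → ℝ}

theorem edgeWt_comm (hsymm1 : ∀ u v w, m u v w = m v u w) (v u : V) :
    edgeWt m v u = edgeWt m u v :=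
  sum_congr rfl fun w _ => hsymm1 v u w

theorem sum_mid_eq_edgeWt (hsymm2 : ∀ u v w, m u v w = m u w v) (v w : V) :
    ∑ u, m v u w = edgeWt m v w :=
  sum_congr rfl fun u _ => hsymm2 v u w

theorem triangleWt_eq_zero_of_edgeWt_eq_zero (hnn : ∀ u v w, 0 ≤ m u v w) {v u : V}
    (h : edgeWt m v u = 0) (w : V) : m v u w = 0 :=
  (sum_eq_zero_iff_of_nonneg fun w _ => hnn v u w).mp h w (mem_univ w)

theorem localNormSq_add_const (v : V) (f : V → ℝ) (c : ℝ) :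
    localNormSq m v (fun u => f u + c) =
      localNormSq m v f + 2 * c * ∑ u, edgeWt m v u * f u + c ^ 2 * vertWt m v := by
  simp only [localNormSq, vertWt, mul_sum, ← sum_add_distrib]
  exact sum_congr rfl fun u _ => by ring

theorem localForm_add_const (hsymm2 : ∀ u v w, m u v w = m u w v) (v : V) (f : V → ℝ)
    (c : ℝ) :
    localForm m v (fun u => f u + c) =
      localForm m v f + 2 * c * ∑ u, edgeWt m v u * f u + c ^ 2 * vertWt m v := by
  have hmid : ∑ u, (∑ w, m v u w * f w) = ∑ w, edgeWt m v w * f w := by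
    rw [sum_comm]
    exact sum_congr rfl fun w _ => by rw [← sum_mul, sum_mid_eq_edgeWt hsymm2]
  have hrow : ∀ u, ∑ w, m v u w * (f w + c) = ∑ w, m v u w * f w + edgeWt m v u * c := by
    intro u
    simp only [mul_add, sum_add_distrib, edgeWt, sum_mul]
  have hterm : ∀ u, (∑ w, m v u w * f w + edgeWt m v u * c) * (f u + c) =
      (∑ w, m v u w * f w) * f u + c * (∑ w, m v u w * f w)
        + c * (edgeWt m v u * f u) + c ^ 2 * edgeWt m v u :=
    fun u => by ring
  simp only [localForm, vertWt, hrow, hterm, sum_add_distrib, ← mul_sum, hmid]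
  ring

theorem sum_localNormSq (hsymm1 : ∀ u v w, m u v w = m v u w) (g : V → ℝ) :
    ∑ v, localNormSq m v g = globalNormSq m g := by
  simp only [localNormSq, globalNormSq]
  rw [sum_comm]
  exact sum_congr rfl fun u _ => by
    rw [← sum_mul, vertWt]
    exact congrArg (· * g u ^ 2) (sum_congr rfl fun v _ => edgeWt_comm hsymm1 v u)

theorem sum_localForm (hsymm1 : ∀ u v w, m u v w = m v u w)
    (hsymm2 : ∀ u v w, m u v w = m u w v) (g : V → ℝ) :
    ∑ v, localForm m v g = globalForm m g := by
  simp only [localForm, globalForm, edgeWt, sum_mul]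
  rw [sum_comm]
  refine sum_congr rfl fun u _ => ?_
  rw [sum_comm]
  refine sum_congr rfl fun w _ => sum_congr rfl fun v _ => ?_
  rw [hsymm1 v u w, hsymm2 u v w]

theorem sum_shift_terms (g : V → ℝ) (t : ℝ) :
    ∑ v, (2 * (t * g v) * ∑ u, edgeWt m v u * g u + (t * g v) ^ 2 * vertWt m v) =
      2 * t * globalForm m g + t ^ 2 * globalNormSq m g := by
  rw [globalForm, globalNormSq, mul_sum, mul_sum, ← sum_add_distrib]
  exact sum_congr rfl fun v _ => by ring

theorem sum_localNormSq_shift (hsymm1 : ∀ u v w, m u v w = m v u w) (g : V → ℝ) (t : ℝ) :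
    ∑ v, localNormSq m v (fun u => g u + t * g v) =
      (1 + t ^ 2) * globalNormSq m g + 2 * t * globalForm m g := by
  simp only [localNormSq_add_const, sum_add_distrib, add_assoc]
  rw [sum_localNormSq hsymm1, ← sum_add_distrib, sum_shift_terms]
  ring

theorem sum_localForm_shift (hsymm1 : ∀ u v w, m u v w = m v u w)
    (hsymm2 : ∀ u v w, m u v w = m u w v) (g : V → ℝ) (t : ℝ) :
    ∑ v, localForm m v (fun u => g u + t * g v) =
      (1 + 2 * t) * globalForm m g + t ^ 2 * globalNormSq m g := by
  simp only [localForm_add_const hsymm2, sum_add_distrib, add_assoc]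
  rw [sum_localForm hsymm1 hsymm2, ← sum_add_distrib, sum_shift_terms]
  ring

theorem mul_localNormSq_le_localForm (hnn : ∀ u v w, 0 ≤ m u v w) {v : V}
    (hv : 0 < vertWt m v) {η : ℝ} {f : V → ℝ}
    (h : η * ∑ u, (edgeWt m v u / vertWt m v) * f u ^ 2 ≤
      ∑ u, (edgeWt m v u / vertWt m v) * ((∑ w, m v u w * f w) / edgeWt m v u) * f u) :
    η * localNormSq m v f ≤ localForm m v f := by
  have hlhs : ∑ u, (edgeWt m v u / vertWt m v) * f u ^ 2 = localNormSq m v f / vertWt m v := by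
    rw [localNormSq, sum_div]
    exact sum_congr rfl fun u _ => by ring
  have hrhs : ∑ u, (edgeWt m v u / vertWt m v) * ((∑ w, m v u w * f w) / edgeWt m v u) * f u =
      localForm m v f / vertWt m v := by
    rw [localForm, sum_div]
    refine sum_congr rfl fun u _ => ?_
    -- a zero edge weight makes the division junk, but then the whole row `m v u ·` vanishes
    by_cases he : edgeWt m v u = 0
    · simp [triangleWt_eq_zero_of_edgeWt_eq_zero hnn he]
    · field_simp
  rw [hlhs, hrhs, ← mul_div_assoc, div_le_div_iff_of_pos_right hv] at h
  exact h

theorem sum_vertWt_mul_avg (hpos : ∀ v, 0 < vertWt m v) (g : V → ℝ) :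
    ∑ v, vertWt m v * ((∑ u, edgeWt m v u * g u) / vertWt m v) * g v = globalForm m g :=
  sum_congr rfl fun v _ => by rw [mul_div_cancel₀ _ (hpos v).ne']

theorem div_one_sub_mul_le_of_forall_shift {η N Q : ℝ} (hη : η < 0)
    (h : ∀ t : ℝ, η * ((1 + t ^ 2) * N + 2 * t * Q) ≤ (1 + 2 * t) * Q + t ^ 2 * N) :
    η / (1 - η) * N ≤ Q := by
  have h1 : 0 < 1 - η := by linarith
  have h2 : 0 < 1 - 2 * η := by linarith
  have ht := h (η / (η - 1))
  have hne : η - 1 ≠ 0 := by linarith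
  rw [div_pow, ← sub_nonneg] at ht
  have key : (1 + 2 * (η / (η - 1))) * Q + η ^ 2 / (η - 1) ^ 2 * N -
      η * ((1 + η ^ 2 / (η - 1) ^ 2) * N + 2 * (η / (η - 1)) * Q) =
      (1 - 2 * η) * (Q - η / (1 - η) * N) := by
    field_simp
    ring
  rw [key] at ht
  have := nonneg_of_mul_nonneg_right ht h2
  linarith

end

theorem trickle_down_negative_general {V : Type*} [Fintype V]
    (m : V → V → V → ℝ)
    (hnn : ∀ u v w, 0 ≤ m u v w)
    (hsymm1 : ∀ u v w, m u v w = m v u w)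
    (hsymm2 : ∀ u v w, m u v w = m u w v)
    (hpos : ∀ v, 0 < vertWt m v)
    (eta : ℝ) (heta2 : eta < 0)
    (hlocal : ∀ v : V, ∀ f : V → ℝ,
      eta * ∑ u, (edgeWt m v u / vertWt m v) * f u ^ 2 ≤
        ∑ u, (edgeWt m v u / vertWt m v) *
          ((∑ w, m v u w * f w) / edgeWt m v u) * f u) :
    ∀ g : V → ℝ,
      (eta / (1 - eta)) * ∑ v, vertWt m v * g v ^ 2 ≤
        ∑ v, vertWt m v * ((∑ u, edgeWt m v u * g u) / vertWt m v) * g v := by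
  intro g
  rw [sum_vertWt_mul_avg hpos]
  change eta / (1 - eta) * globalNormSq m g ≤ globalForm m g
  refine div_one_sub_mul_le_of_forall_shift heta2 fun t => ?_
  rw [← sum_localNormSq_shift hsymm1, ← sum_localForm_shift hsymm1 hsymm2, mul_sum]
  exact sum_le_sum fun v _ => mul_localNormSq_le_localForm hnn (hpos v) (hlocal v _)

/-- Trickle-down, negative direction. With the same setup as the trickle-down theorem
(a nonempty weighted 2-dimensional simplicial complex with balanced weights encoded by the
symmetric distribution `m` on ordered triangles), if every local operator satisfies
`⟨A_v f, f⟩ ≥ η⟨f,f⟩` for all `f` on the link of `v` (with `η ∈ [−1,0)`), then for every `g`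
on the vertex set, `⟨Ag, g⟩ ≥ (η/(1−η))·⟨g,g⟩`. -/
theorem trickle_down_negative {V : Type*} [Fintype V] [DecidableEq V] [Nonempty V]
    (m : V → V → V → ℝ)
    (hnn : ∀ u v w, 0 ≤ m u v w)
    (hsymm1 : ∀ u v w, m u v w = m v u w)
    (hsymm2 : ∀ u v w, m u v w = m u w v)
    (hdist : ∀ u v w, (u = v ∨ v = w ∨ u = w) → m u v w = 0)
    (hsum : ∑ u, ∑ v, ∑ w, m u v w = 1)
    (hpos : ∀ v, 0 < vertWt m v)
    (eta : ℝ) (heta1 : -1 ≤ eta) (heta2 : eta < 0)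
    (hlocal : ∀ v : V, ∀ f : V → ℝ,
      eta * ∑ u, (edgeWt m v u / vertWt m v) * f u ^ 2 ≤
        ∑ u, (edgeWt m v u / vertWt m v) *
          ((∑ w, m v u w * f w) / edgeWt m v u) * f u) :
    ∀ g : V → ℝ,
      (eta / (1 - eta)) * ∑ v, vertWt m v * g v ^ 2 ≤
        ∑ v, vertWt m v * ((∑ u, edgeWt m v u * g u) / vertWt m v) * g v :=
  trickle_down_negative_general m hnn hsymm1 hsymm2 hpos eta heta2 hlocal
end

section
/- Let G be a group with subgroups K1,…,Kd, and let v be the vertex corresponding to the coset K1 in the coset complex X(G, {K1,…,Kd}). Then the link of v is isomorphic (as a simplicial complex) to the coset complex X(K1, {K1 ∩ K2, …, K1 ∩ Kd}). -/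
/-!
A common element of a face containing the coset `K i₀` lies in `K i₀`. For `g ∈ K i₀` the coset
`g K j` is the image of `g (K i₀ ∩ K j)` under `k (K i₀ ∩ K j) ↦ k K j`, which is injective on
`K i₀ ⧸ (K i₀ ∩ K j)`; hence the faces of the link of `K i₀` are exactly the images of the faces
of `X(K i₀, {K i₀ ∩ K j : j ≠ i₀})`.
-/
/-- Faces of the coset complex `X(G, {K1,…,Kd})`: a finite set of cosets (elements of
`Σ i, G ⧸ K i`) is a face iff its members have pairwise distinct types and a common element. -/
def IsCosetFace {G : Type*} [Group G] {d : ℕ} (K : Fin d → Subgroup G)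
    (s : Finset (Σ i : Fin d, G ⧸ K i)) : Prop :=
  (∀ v ∈ s, ∀ w ∈ s, v ≠ w → v.1 ≠ w.1) ∧
    ∃ g : G, ∀ v ∈ s, (QuotientGroup.mk g : G ⧸ K v.1) = v.2

theorem Finset.exists_map_eq_of_forall_mem_range {α β : Type*} (f : α ↪ β) {t : Finset β}
    (ht : ∀ b ∈ t, b ∈ Set.range f) : ∃ s : Finset α, s.map f = t := by
  classical
  refine ⟨t.preimage f f.injective.injOn, ?_⟩
  rw [map_eq_image, image_preimage, filter_true_of_mem ht]

theorem QuotientGroup.mk_eq_mk_one_iff {G : Type*} [Group G] {H : Subgroup G} {g : G} :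
    (QuotientGroup.mk g : G ⧸ H) = QuotientGroup.mk 1 ↔ g ∈ H := by
  rw [QuotientGroup.eq, mul_one, inv_mem_iff]

namespace Subgroup

variable {G : Type*} [Group G]

def quotientSubgroupOfEmbedding (H K : Subgroup G) : K ⧸ H.subgroupOf K ↪ G ⧸ H where
  toFun := Quotient.map' Subtype.val fun a b h => by
    rw [QuotientGroup.leftRel_apply, mem_subgroupOf] at h
    rwa [QuotientGroup.leftRel_apply]
  inj' := Quotient.ind₂' fun a b h => by
    simpa only [Quotient.map'_mk'', QuotientGroup.eq, mem_subgroupOf, coe_mul, coe_inv] using h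

@[simp]
theorem quotientSubgroupOfEmbedding_apply_mk (H K : Subgroup G) (k : K) :
    quotientSubgroupOfEmbedding H K (QuotientGroup.mk k) = QuotientGroup.mk (k : G) :=
  rfl

theorem mk_eq_quotientSubgroupOfEmbedding_iff {H K : Subgroup G} (k : K)
    (q : K ⧸ H.subgroupOf K) :
    (QuotientGroup.mk (k : G) : G ⧸ H) = quotientSubgroupOfEmbedding H K q ↔
      QuotientGroup.mk k = q := by
  rw [← quotientSubgroupOfEmbedding_apply_mk, EmbeddingLike.apply_eq_iff_eq]

end Subgroup

namespace CosetComplex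

open Subgroup

variable {G : Type*} [Group G]

section Embedding

variable {ι : Type*} (K : ι → Subgroup G) (i₀ : ι)

/-- The vertex map from `X(K i₀, {K i₀ ∩ K j : j ≠ i₀})` to `X(G, K)`. -/
def linkEmbedding :
    (Σ j : {j : ι // j ≠ i₀}, K i₀ ⧸ (K j.1).subgroupOf (K i₀)) ↪ Σ i : ι, G ⧸ K i :=
  Function.Embedding.sigmaMap (Function.Embedding.subtype _)
    fun j => quotientSubgroupOfEmbedding (K j.1) (K i₀)

@[simp]
theorem linkEmbedding_fst (w : Σ j : {j : ι // j ≠ i₀}, K i₀ ⧸ (K j.1).subgroupOf (K i₀)) :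
    (linkEmbedding K i₀ w).1 = w.1.1 :=
  rfl

theorem linkEmbedding_snd (w : Σ j : {j : ι // j ≠ i₀}, K i₀ ⧸ (K j.1).subgroupOf (K i₀)) :
    (linkEmbedding K i₀ w).2 = quotientSubgroupOfEmbedding (K w.1.1) (K i₀) w.2 :=
  rfl

theorem mk_one_notMem_map_linkEmbedding
    (s : Finset (Σ j : {j : ι // j ≠ i₀}, K i₀ ⧸ (K j.1).subgroupOf (K i₀))) :
    (⟨i₀, QuotientGroup.mk 1⟩ : Σ i : ι, G ⧸ K i) ∉ s.map (linkEmbedding K i₀) := by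
  rw [Finset.mem_map]
  rintro ⟨w, -, hw⟩
  exact w.1.2 (congrArg Sigma.fst hw)

theorem mem_range_linkEmbedding {v : Σ i : ι, G ⧸ K i} (hv : v.1 ≠ i₀) {g : G} (hg : g ∈ K i₀)
    (hgv : (QuotientGroup.mk g : G ⧸ K v.1) = v.2) : v ∈ Set.range (linkEmbedding K i₀) :=
  ⟨⟨⟨v.1, hv⟩, QuotientGroup.mk (⟨g, hg⟩ : K i₀)⟩, Sigma.ext rfl (heq_of_eq hgv)⟩

end Embedding

variable {n : ℕ} (K : Fin n → Subgroup G) (i₀ : Fin n)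

theorem isCosetFace_cons_iff {t : Finset (Σ i : Fin n, G ⧸ K i)}
    (h : (⟨i₀, QuotientGroup.mk 1⟩ : Σ i : Fin n, G ⧸ K i) ∉ t) :
    IsCosetFace K (t.cons ⟨i₀, QuotientGroup.mk 1⟩ h) ↔
      (∀ v ∈ t, v.1 ≠ i₀) ∧ (∀ v ∈ t, ∀ w ∈ t, v ≠ w → v.1 ≠ w.1) ∧
        ∃ g ∈ K i₀, ∀ v ∈ t, (QuotientGroup.mk g : G ⧸ K v.1) = v.2 := by
  have hne : ∀ v ∈ t, v ≠ ⟨i₀, QuotientGroup.mk 1⟩ := fun v hv hvb => h (hvb ▸ hv)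
  simp only [IsCosetFace, Finset.forall_mem_cons, ne_eq, not_true_eq_false, IsEmpty.forall_iff,
    true_and, QuotientGroup.mk_eq_mk_one_iff, and_assoc]
  constructor
  · rintro ⟨-, hdist, hg⟩
    exact ⟨fun v hv => (hdist v hv).1 (hne v hv), fun v hv => (hdist v hv).2, hg⟩
  · rintro ⟨htype, hdist, hg⟩
    exact ⟨fun w hw _ => Ne.symm (htype w hw), fun v hv => ⟨fun _ => htype v hv, hdist v hv⟩, hg⟩

theorem isCosetFace_cons_map_linkEmbedding_iff
    (s : Finset (Σ j : {j : Fin n // j ≠ i₀}, K i₀ ⧸ (K j.1).subgroupOf (K i₀))) :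
    IsCosetFace K ((s.map (linkEmbedding K i₀)).cons ⟨i₀, QuotientGroup.mk 1⟩
        (mk_one_notMem_map_linkEmbedding K i₀ s)) ↔
      (∀ w ∈ s, ∀ w' ∈ s, w ≠ w' → w.1 ≠ w'.1) ∧
        ∃ g : K i₀, ∀ w ∈ s, (QuotientGroup.mk g : K i₀ ⧸ (K w.1.1).subgroupOf (K i₀)) = w.2 := by
  rw [isCosetFace_cons_iff]
  simp only [Finset.forall_mem_map, linkEmbedding_fst, linkEmbedding_snd,
    (linkEmbedding K i₀).injective.ne_iff, Subtype.coe_ne_coe]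
  constructor
  · rintro ⟨-, hdist, g, hg, hgs⟩
    exact ⟨hdist, ⟨g, hg⟩, fun w hw =>
      (mk_eq_quotientSubgroupOfEmbedding_iff ⟨g, hg⟩ w.2).1 (hgs w hw)⟩
  · rintro ⟨hdist, g, hgs⟩
    exact ⟨fun w _ => w.1.2, hdist, g, g.2, fun w hw =>
      (mk_eq_quotientSubgroupOfEmbedding_iff g w.2).2 (hgs w hw)⟩

theorem exists_map_linkEmbedding_eq_of_isCosetFace_cons {t : Finset (Σ i : Fin n, G ⧸ K i)}
    (h : (⟨i₀, QuotientGroup.mk 1⟩ : Σ i : Fin n, G ⧸ K i) ∉ t)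
    (hface : IsCosetFace K (t.cons ⟨i₀, QuotientGroup.mk 1⟩ h)) :
    ∃ s : Finset (Σ j : {j : Fin n // j ≠ i₀}, K i₀ ⧸ (K j.1).subgroupOf (K i₀)),
      s.map (linkEmbedding K i₀) = t := by
  obtain ⟨htype, -, g, hg, hgt⟩ := (isCosetFace_cons_iff K i₀ h).1 hface
  exact Finset.exists_map_eq_of_forall_mem_range _ fun v hv =>
    mem_range_linkEmbedding K i₀ (htype v hv) hg (hgt v hv)

end CosetComplex

/-- Let `v₀` be the vertex `K 0` (the identity coset of type `0`) of the coset complex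
`X(G, {K 0,…,K (d+1)})` (with `d + 2 ≥ 2` subgroups). Then the link of `v₀` is isomorphic, as
a simplicial complex, to the coset complex `X(K 0, {K 0 ∩ K i : i ≠ 0})`: there is an
injection of the vertices of the latter into the vertices of the former carrying the faces of
`X(K 0, {K 0 ∩ K i : i ≠ 0})` exactly onto the faces of the link of `v₀`. -/
theorem link_of_cosetComplex_iso {G : Type*} [Group G] {d : ℕ}
    (K : Fin (d + 2) → Subgroup G) :
    ∃ e : (Σ j : {j : Fin (d + 2) // j ≠ 0}, K 0 ⧸ (K j.1).subgroupOf (K 0)) ↪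
        (Σ i : Fin (d + 2), G ⧸ K i),
      (∀ s : Finset (Σ j : {j : Fin (d + 2) // j ≠ 0}, K 0 ⧸ (K j.1).subgroupOf (K 0)),
        ((∀ w ∈ s, ∀ w' ∈ s, w ≠ w' → w.1 ≠ w'.1) ∧
            ∃ g : K 0, ∀ w ∈ s,
              (QuotientGroup.mk g : K 0 ⧸ (K w.1.1).subgroupOf (K 0)) = w.2) ↔
          ∃ h : (⟨0, QuotientGroup.mk (1 : G)⟩ : Σ i : Fin (d + 2), G ⧸ K i) ∉ s.map e,
            IsCosetFace K ((s.map e).cons ⟨0, QuotientGroup.mk (1 : G)⟩ h)) ∧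
      (∀ t : Finset (Σ i : Fin (d + 2), G ⧸ K i),
        (∃ h : (⟨0, QuotientGroup.mk (1 : G)⟩ : Σ i : Fin (d + 2), G ⧸ K i) ∉ t,
          IsCosetFace K (t.cons ⟨0, QuotientGroup.mk (1 : G)⟩ h)) →
          ∃ s : Finset (Σ j : {j : Fin (d + 2) // j ≠ 0}, K 0 ⧸ (K j.1).subgroupOf (K 0)),
            s.map e = t) := by
  refine ⟨CosetComplex.linkEmbedding K 0, fun s => ?_, fun t ⟨h, hface⟩ =>
    CosetComplex.exists_map_linkEmbedding_eq_of_isCosetFace_cons K 0 h hface⟩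
  rw [exists_prop_of_true (CosetComplex.mk_one_notMem_map_linkEmbedding K 0 s),
    CosetComplex.isCosetFace_cons_map_linkEmbedding_iff]
end

section
/- Let R = F_p[t]/(t^s) with s ≥ 2 and d ≥ 3, and for each i ∈ {1,…,d} let K_i be the subgroup of SL_d(R) generated by all elementary matrices e_{j,j+1}(at+b) with a,b ∈ F_p and j ∈ {1,…,d}\{i} (indices mod d, so j = d gives e_{d,1}). Then for any subset S ⊆ {1,…,d} with |S| ≤ d−2, the group K_S = ⟨e_{j,j+1}(at+b) : a,b ∈ F_p, j ∉ S⟩ is generated by the subgroups {K_S ∩ K_i : i ∈ {1,…,d} \ S}. -/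
open Polynomial Matrix

/-- The subgroup `K_S` of `SL_d(F_p[t]/(t^s))` generated by the elementary matrices
`e_{j,j+1}(at+b)` for `a, b ∈ F_p` and `j ∉ S` (indices taken cyclically mod `d`). -/
noncomputable def KS (p s d : ℕ) [Fact p.Prime] [NeZero d] (S : Set (Fin d)) :
    Subgroup (Matrix.SpecialLinearGroup (Fin d)
      (Polynomial (ZMod p) ⧸ Ideal.span {(X : Polynomial (ZMod p)) ^ s})) :=
  Subgroup.closure
    {M | ∃ a b : ZMod p, ∃ j : Fin d, j ∉ S ∧
      (M : Matrix (Fin d) (Fin d) _) =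
        Matrix.transvection j (j + 1)
          (Ideal.Quotient.mk (Ideal.span {(X : Polynomial (ZMod p)) ^ s}) (C a * X + C b))}

theorem Finset.exists_notMem_ne_of_card_add_one_lt {α : Type*} [Fintype α] [DecidableEq α]
    (S : Finset α) (j : α) (h : S.card + 1 < Fintype.card α) : ∃ i ∉ S, i ≠ j := by
  obtain ⟨i, -, hi⟩ := exists_mem_notMem_of_card_lt_card (s := insert j S) (t := univ)
    (by rw [card_univ]; exact (card_insert_le j S).trans_lt h)
  exact ⟨i, fun hiS => hi (mem_insert_of_mem hiS), fun hij => hi (hij ▸ mem_insert_self j S)⟩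

theorem mem_KS_of_notMem {p s d : ℕ} [Fact p.Prime] [NeZero d] {S : Set (Fin d)} {j : Fin d}
    (hj : j ∉ S) {a b : ZMod p}
    {M : SpecialLinearGroup (Fin d) ((ZMod p)[X] ⧸ Ideal.span {(X : (ZMod p)[X]) ^ s})}
    (hM : (M : Matrix (Fin d) (Fin d) _) = transvection j (j + 1)
      (Ideal.Quotient.mk (Ideal.span {(X : (ZMod p)[X]) ^ s}) (C a * X + C b))) :
    M ∈ KS p s d S :=
  Subgroup.subset_closure ⟨a, b, j, hj, hM⟩

theorem KS_eq_sup_inter_general {p s d : ℕ} [Fact p.Prime] [NeZero d] (hd : 3 ≤ d)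
    (S : Finset (Fin d)) (hS : S.card ≤ d - 2) :
    KS p s d ↑S = ⨆ i ∈ (↑S : Set (Fin d))ᶜ, (KS p s d ↑S ⊓ KS p s d {i}) := by
  refine le_antisymm ?_ (iSup₂_le fun _ _ => inf_le_left)
  rw [KS, Subgroup.closure_le]
  rintro M ⟨a, b, j, hj, hM⟩
  obtain ⟨i, hiS, hij⟩ :=
    S.exists_notMem_ne_of_card_add_one_lt j (by rw [Fintype.card_fin]; omega)
  have hM_inter : M ∈ KS p s d ↑S ⊓ KS p s d {i} :=
    ⟨mem_KS_of_notMem hj hM, mem_KS_of_notMem (Set.mem_singleton_iff.not.mpr hij.symm) hM⟩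
  exact Subgroup.mem_iSup_of_mem i (Subgroup.mem_iSup_of_mem hiS hM_inter)

/-- For `R = F_p[t]/(t^s)` (`s ≥ 2`, `d ≥ 3`) and any `S ⊆ {1,…,d}` with `|S| ≤ d − 2`, the
group `K_S = ⟨e_{j,j+1}(at+b) : a,b ∈ F_p, j ∉ S⟩` is generated by the subgroups
`K_S ∩ K_i` for `i ∉ S`. -/
theorem KS_eq_sup_inter {p s d : ℕ} [Fact p.Prime] [NeZero d] (hs : 2 ≤ s) (hd : 3 ≤ d)
    (S : Finset (Fin d)) (hS : S.card ≤ d - 2) :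
    KS p s d ↑S = ⨆ i ∈ (↑S : Set (Fin d))ᶜ, (KS p s d ↑S ⊓ KS p s d {i}) :=
  KS_eq_sup_inter_general hd S hS
end
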